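/- Fix α > 0 and ν > 0, and choose β with 1/α < β < (1+ν)/α. Let X be the random vector in ℝ^2 supported on the rays L_k through angles b_k = π − π/2^{k-1}, with P(X ∈ A) = Σ_k q_k Q_k(A ∩ L_k), q_k = 1/(k(k+1)), where Q_k has radial distribution function F_k(x) = 1 − k^{-ν} x^{-α} for x ≥ 1. Then: (a) X has a regularly varying tail of index α with spectral measure σ({b_k}) = q_k k^{-ν}; (b) for the σ-a.e. continuous but unbounded function h = Σ_k k^β 1_{I_k} (I_k disjoint arcs around b_k), the vector Y = X h(X/‖X‖) satisfies r^α P(‖Y‖ > r) ≥ r^α / (r^{1/β} + 1) for all r > 1, hence r^α P(‖Y‖ > r) → ∞ as r → ∞, so Y does not have a regularly varying tail of index α. -/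

import Mathlib

open Set Topology MeasureTheory Filter Real

/-- The angles `b_k = π - π/2^{k-1}`, `k ≥ 1`, of Example 2. -/
noncomputable def bAngle (k : ℕ) : ℝ := π - π / 2 ^ (k - 1)

/-- The weights `q_k = 1/(k(k+1))`, `k ≥ 1`, of Example 2. -/
noncomputable def qWeight (k : ℕ) : ℝ := 1 / (k * (k + 1))

/-- The disjoint arcs `I_k` of Example 2 :
`I₁ = (7π/4, 2π) ∪ [0, π/4)` and `I_k = (b_k - π/2^{k+1}, b_k + π/2^{k+1})` for `k ≥ 2`. -/
noncomputable def arcI (k : ℕ) : Set ℝ :=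
  if k = 1 then Set.Ioo (7 * π / 4) (2 * π) ∪ Set.Ico 0 (π / 4)
  else Set.Ioo (bAngle k - π / 2 ^ (k + 1)) (bAngle k + π / 2 ^ (k + 1))

/-- The unbounded, `σ`-a.e. continuous function `h = Σ_k k^β 1_{I_k}` of Example 2. -/
noncomputable def hEx2 (β : ℝ) (x : ℝ) : ℝ :=
  ∑' k : ℕ, (arcI (k + 1)).indicator (fun _ => ((k : ℝ) + 1) ^ β) x

/-- The spectral measure `σ({b_k}) = q_k k^{-ν}` of Example 2. -/
noncomputable def σEx2 (ν : ℝ) : Measure ℝ :=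
  Measure.sum fun k : ℕ =>
    ENNReal.ofReal (qWeight (k + 1) * ((k : ℝ) + 1) ^ (-ν)) • Measure.dirac (bAngle (k + 1))

/-!
On the ray through `b_k` the tail `P(Θ = b_k, ‖X‖ > r) = q_k k^{-ν} r^{-α}` is an exact power of
`r`, so summing over the rays meeting `B` gives `r^α P(Θ ∈ B, ‖X‖ > r) = σ(B)` for all `r ≥ 1`.
Since `h(b_k) = k^β` and `‖X‖ ≥ 1`, every ray with `k^β > r`, in particular every
`k > ⌊r^{1/β}⌋`, lies in `{‖Y‖ > r}`. The masses `q_k = 1/k - 1/(k+1)` of these rays telescope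
to `1/(⌊r^{1/β}⌋ + 1) ≥ 1/(r^{1/β} + 1)`, and `r^α/(r^{1/β} + 1)` diverges because `1/β < α`.
-/

lemma bAngle_succ (k : ℕ) : bAngle (k + 1) = π - π / 2 ^ k := by simp [bAngle]

lemma pi_div_two_pow_succ (k : ℕ) : π / 2 ^ (k + 1) = π / 2 ^ k / 2 := by
  rw [pow_succ, div_div]

lemma bAngle_succ_strictMono : StrictMono fun k : ℕ => bAngle (k + 1) :=
  strictMono_nat_of_lt_succ fun k => by
    simp only [bAngle_succ, pi_div_two_pow_succ (k := k)]
    linarith [div_pos pi_pos (pow_pos two_pos k)]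

lemma two_mul_pi_div_two_pow_le {k j : ℕ} (h : k < j) : 2 * (π / 2 ^ j) ≤ π / 2 ^ k := by
  obtain ⟨d, rfl⟩ := Nat.exists_eq_add_of_lt h
  rw [pow_add, pow_add, ← div_div, ← div_div, pow_one, mul_div_cancel₀ _ two_ne_zero]
  exact div_le_self (div_pos pi_pos (pow_pos two_pos k)).le (one_le_pow₀ one_le_two)

lemma bAngle_succ_mem_arcI_succ_iff (j k : ℕ) : bAngle (k + 1) ∈ arcI (j + 1) ↔ j = k := by
  have hπ := pi_pos
  have hek := div_pos hπ (pow_pos two_pos k)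
  rcases j with _ | j
  · simp only [arcI, if_pos, bAngle_succ, mem_union, mem_Ioo, mem_Ico]
    refine ⟨fun h => ?_, fun h => ?_⟩
    · by_contra hk
      have := two_mul_pi_div_two_pow_le (Nat.pos_of_ne_zero (Ne.symm hk))
      rcases h with h | h <;> simp only [pow_zero, div_one] at this <;> linarith
    · subst h; right; norm_num; positivity
  -- `I_{j+2}` is the interval of radius `ε/4` around `π - ε`, `ε = π/2^(j+1)`, while for
  -- `k ≠ j + 1` the number `π/2^k` differs from `ε` by a factor of at least 2.
  · have hrad : π / 2 ^ (j + 1 + 1 + 1) = π / 2 ^ (j + 1) / 4 := by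
      rw [pi_div_two_pow_succ, pi_div_two_pow_succ, div_div]; norm_num
    have hej := div_pos hπ (pow_pos two_pos (j + 1))
    simp only [arcI, if_neg (by omega : j + 1 + 1 ≠ 1), bAngle_succ, hrad, mem_Ioo]
    refine ⟨fun ⟨h₁, h₂⟩ => ?_, fun h => ?_⟩
    · rcases lt_trichotomy k (j + 1) with hk | hk | hk
      · linarith [two_mul_pi_div_two_pow_le hk]
      · exact hk.symm
      · linarith [two_mul_pi_div_two_pow_le hk]
    · subst h; constructor <;> linarith

lemma hEx2_bAngle_succ (β : ℝ) (k : ℕ) : hEx2 β (bAngle (k + 1)) = ((k : ℝ) + 1) ^ β := by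
  rw [hEx2, tsum_eq_single k fun j hj =>
    indicator_of_notMem (fun h => hj ((bAngle_succ_mem_arcI_succ_iff j k).1 h)) _]
  exact indicator_of_mem ((bAngle_succ_mem_arcI_succ_iff k k).2 rfl) _

lemma hasSum_sub_succ_of_antitone {f : ℕ → ℝ} (hf : Antitone f) (hlim : Tendsto f atTop (𝓝 0)) :
    HasSum (fun n => f n - f (n + 1)) (f 0) := by
  rw [hasSum_iff_tendsto_nat_of_nonneg (fun n => sub_nonneg.2 (hf n.le_succ))]
  simp only [Finset.sum_range_sub']
  simpa using tendsto_const_nhds.sub hlim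

lemma qWeight_add_succ (m j : ℕ) :
    qWeight (m + j + 1) = 1 / ((m : ℝ) + 1 + j) - 1 / ((m : ℝ) + 1 + (j + 1 : ℕ)) := by
  rw [qWeight]
  push_cast
  field_simp
  ring

lemma tsum_ofReal_qWeight_add_succ (m : ℕ) :
    ∑' j : ℕ, ENNReal.ofReal (qWeight (m + j + 1)) = ENNReal.ofReal (1 / ((m : ℝ) + 1)) := by
  have hsum : HasSum (fun j : ℕ => qWeight (m + j + 1)) (1 / ((m : ℝ) + 1)) := by
    simp only [qWeight_add_succ]
    have hanti : Antitone fun j : ℕ => 1 / ((m : ℝ) + 1 + j) := fun i j hij => by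
      dsimp only
      gcongr
    have hlim : Tendsto (fun j : ℕ => 1 / ((m : ℝ) + 1 + j)) atTop (𝓝 0) := by
      simpa only [one_div, Function.comp_def] using tendsto_inv_atTop_zero.comp
        (tendsto_atTop_add_const_left atTop ((m : ℝ) + 1) tendsto_natCast_atTop_atTop)
    simpa using hasSum_sub_succ_of_antitone hanti hlim
  rw [← ENNReal.ofReal_tsum_of_nonneg (fun j => by rw [qWeight]; positivity) hsum.summable,
    hsum.tsum_eq]

lemma σEx2_apply (ν : ℝ) {B : Set ℝ} (hB : MeasurableSet B) :
    σEx2 ν B = ∑' k : ℕ,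
      B.indicator (fun _ => ENNReal.ofReal (qWeight (k + 1) * ((k : ℝ) + 1) ^ (-ν)))
        (bAngle (k + 1)) := by
  rw [σEx2, Measure.sum_apply _ hB]
  refine tsum_congr fun k => ?_
  rw [Measure.smul_apply, Measure.dirac_apply' _ hB, smul_eq_mul]
  by_cases h : bAngle (k + 1) ∈ B <;> simp [h]

lemma measure_eq_tsum_inter_of_compl_iUnion_null {Ω ι : Type*} [MeasurableSpace Ω] [Countable ι]
    {μ : Measure Ω} {T : ι → Set Ω} (hT : ∀ i, MeasurableSet (T i))
    (hdisj : Pairwise (Function.onFun Disjoint T)) (hcover : μ (⋃ i, T i)ᶜ = 0) {S : Set Ω}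
    (hS : MeasurableSet S) : μ S = ∑' i, μ (S ∩ T i) := by
  rw [← measure_inter_conull hcover, inter_iUnion,
    measure_iUnion (fun i j h => (hdisj h).mono inter_subset_right inter_subset_right)
      fun i => hS.inter (hT i)]

lemma tendsto_rpow_div_rpow_add_one_atTop {a c : ℝ} (hc : 0 ≤ c) (hca : c < a) :
    Tendsto (fun r : ℝ => r ^ a / (r ^ c + 1)) atTop atTop := by
  refine tendsto_atTop_mono' atTop ?_ ((tendsto_rpow_atTop (sub_pos.2 hca)).atTop_div_const two_pos)
  filter_upwards [eventually_ge_atTop 1] with r hr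
  have hrc : 1 ≤ r ^ c := one_le_rpow hr hc
  rw [rpow_sub (by linarith), div_div]
  exact div_le_div_of_nonneg_left (rpow_nonneg (by linarith) a) (by positivity) (by linarith)

section PolarCoordinates

lemma pairwise_disjoint_angle_eq_bAngle {Ω : Type*} {Θ : Ω → ℝ} :
    Pairwise (Function.onFun Disjoint fun k : ℕ => {ω | Θ ω = bAngle (k + 1)}) :=
  fun _ _ hjk => disjoint_left.2 fun _ hj hk =>
    hjk (bAngle_succ_strictMono.injective (hj.symm.trans hk))

variable {Ω : Type*} [MeasurableSpace Ω] {P : Measure Ω} {R Θ : Ω → ℝ}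

lemma measure_angle_mem_and_lt_radius (hR : Measurable R) (hΘ : Measurable Θ) {α ν : ℝ}
    (hlaw : ∀ k : ℕ, ∀ x : ℝ, 1 ≤ x → P {ω | Θ ω = bAngle (k + 1) ∧ x < R ω}
        = ENNReal.ofReal (qWeight (k + 1) * ((k : ℝ) + 1) ^ (-ν) * x ^ (-α)))
    (hsupp : P {ω | ∀ k : ℕ, Θ ω ≠ bAngle (k + 1)} = 0)
    {B : Set ℝ} (hB : MeasurableSet B) {r : ℝ} (hr : 1 ≤ r) :
    P {ω | Θ ω ∈ B ∧ r < R ω} = ENNReal.ofReal (r ^ (-α)) * σEx2 ν B := by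
  have hcover : P (⋃ k : ℕ, {ω | Θ ω = bAngle (k + 1)})ᶜ = 0 := by
    convert hsupp using 2
    ext ω
    simp
  rw [measure_eq_tsum_inter_of_compl_iUnion_null
      (T := fun k : ℕ => {ω | Θ ω = bAngle (k + 1)}) (fun k => hΘ (measurableSet_singleton _))
      pairwise_disjoint_angle_eq_bAngle hcover
      (show MeasurableSet {ω | Θ ω ∈ B ∧ r < R ω} from
        (hΘ hB).inter (measurableSet_lt measurable_const hR)),
    σEx2_apply ν hB, ← ENNReal.tsum_mul_left]
  refine tsum_congr fun k => ?_
  by_cases hk : bAngle (k + 1) ∈ B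
  · have hset : {ω | Θ ω ∈ B ∧ r < R ω} ∩ {ω | Θ ω = bAngle (k + 1)}
        = {ω | Θ ω = bAngle (k + 1) ∧ r < R ω} := by
      ext ω
      constructor
      · rintro ⟨⟨-, hr⟩, hθ⟩; exact ⟨hθ, hr⟩
      · rintro ⟨hθ, hr⟩; exact ⟨⟨hθ ▸ hk, hr⟩, hθ⟩
    rw [hset, hlaw k r hr, indicator_of_mem hk, ← ENNReal.ofReal_mul (by positivity), mul_comm]
  · have hset : {ω | Θ ω ∈ B ∧ r < R ω} ∩ {ω | Θ ω = bAngle (k + 1)} = ∅ :=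
      eq_empty_of_forall_notMem fun ω ⟨⟨hB, _⟩, hθ⟩ => hk (hθ ▸ hB)
    rw [hset, measure_empty, indicator_of_notMem hk, mul_zero]

lemma ofReal_one_div_le_measure_lt_mul_hEx2 (hΘ : Measurable Θ)
    (hmass : ∀ k : ℕ, P {ω | Θ ω = bAngle (k + 1)} = ENNReal.ofReal (qWeight (k + 1)))
    (hnorm : P {ω | R ω < 1} = 0) {β r : ℝ} (hβ : 0 ≤ β) {m : ℕ} (hm : r < ((m : ℝ) + 1) ^ β) :
    ENNReal.ofReal (1 / ((m : ℝ) + 1)) ≤ P {ω | r < R ω * hEx2 β (Θ ω)} := by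
  have hsub : (⋃ j : ℕ, {ω | Θ ω = bAngle (m + j + 1)}) \ {ω | R ω < 1}
      ⊆ {ω | r < R ω * hEx2 β (Θ ω)} := by
    rintro ω ⟨hθ, hR⟩
    obtain ⟨j, hj⟩ := mem_iUnion.1 hθ
    simp only [mem_ofPred_eq, not_lt] at hj hR ⊢
    have hmj : ((m : ℝ) + 1) ^ β ≤ (((m + j : ℕ) : ℝ) + 1) ^ β := by gcongr; simp
    rw [hj, hEx2_bAngle_succ]
    nlinarith [rpow_nonneg (by positivity : (0 : ℝ) ≤ ((m + j : ℕ) : ℝ) + 1) β]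
  calc ENNReal.ofReal (1 / ((m : ℝ) + 1))
      = ∑' j : ℕ, P {ω | Θ ω = bAngle (m + j + 1)} := by
        rw [← tsum_ofReal_qWeight_add_succ]
        exact tsum_congr fun j => (hmass (m + j)).symm
    _ = P ((⋃ j : ℕ, {ω | Θ ω = bAngle (m + j + 1)}) \ {ω | R ω < 1}) := by
        rw [measure_sdiff_null hnorm, measure_iUnion
          (pairwise_disjoint_angle_eq_bAngle.comp_of_injective (add_right_injective m))
          fun j => hΘ (measurableSet_singleton _)]
    _ ≤ P {ω | r < R ω * hEx2 β (Θ ω)} := measure_mono hsub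

lemma one_div_rpow_add_one_le_measure_lt_mul_hEx2 [IsFiniteMeasure P] (hΘ : Measurable Θ)
    (hmass : ∀ k : ℕ, P {ω | Θ ω = bAngle (k + 1)} = ENNReal.ofReal (qWeight (k + 1)))
    (hnorm : P {ω | R ω < 1} = 0) {β r : ℝ} (hβ : 0 < β) (hr : 0 ≤ r) :
    1 / (r ^ (1 / β) + 1) ≤ (P {ω | r < R ω * hEx2 β (Θ ω)}).toReal := by
  set x := r ^ (1 / β)
  have hx : 0 ≤ x := rpow_nonneg hr _
  have hm : r < ((⌊x⌋₊ : ℝ) + 1) ^ β := by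
    calc r = x ^ β := by rw [← rpow_mul hr, one_div_mul_cancel hβ.ne', rpow_one]
      _ < ((⌊x⌋₊ : ℝ) + 1) ^ β := rpow_lt_rpow hx (Nat.lt_floor_add_one x) hβ
  calc 1 / (x + 1) ≤ 1 / ((⌊x⌋₊ : ℝ) + 1) := by gcongr; exact Nat.floor_le hx
    _ ≤ (P {ω | r < R ω * hEx2 β (Θ ω)}).toReal :=
        (ENNReal.ofReal_le_iff_le_toReal (measure_ne_top _ _)).1
          (ofReal_one_div_le_measure_lt_mul_hEx2 hΘ hmass hnorm hβ.le hm)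

end PolarCoordinates

theorem example_unbounded_radial_function_general
    {Ω : Type*} [MeasurableSpace Ω] (P : Measure Ω) [IsProbabilityMeasure P]
    (X : Ω → EuclideanSpace ℝ (Fin 2)) (hX : Measurable X)
    (Θ : Ω → ℝ) (hΘmeas : Measurable Θ)
    (α ν β : ℝ) (hα : 0 < α) (hβ₁ : 1 / α < β)
    -- the law of X : the angular part takes only the values b_k, the radial part has
    -- distribution function F_k(x) = 1 - k^{-ν} x^{-α} on each ray, and ‖X‖ ≥ 1 a.s.
    (hlaw : ∀ k : ℕ, ∀ x : ℝ, 1 ≤ x →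
      P {ω | Θ ω = bAngle (k + 1) ∧ x < ‖X ω‖}
        = ENNReal.ofReal (qWeight (k + 1) * ((k : ℝ) + 1) ^ (-ν) * x ^ (-α)))
    (hmass : ∀ k : ℕ, P {ω | Θ ω = bAngle (k + 1)} = ENNReal.ofReal (qWeight (k + 1)))
    (hnorm : P {ω | ‖X ω‖ < 1} = 0)
    (hsupp : P {ω | ∀ k : ℕ, Θ ω ≠ bAngle (k + 1)} = 0) :
    -- (a) X has regularly varying tail of index α with spectral measure σEx2 ν
    (∀ B : Set ℝ, MeasurableSet B → σEx2 ν (frontier B) = 0 → ∀ r > 1,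
      r ^ α * (P {ω | Θ ω ∈ B ∧ r < ‖X ω‖}).toReal = ((σEx2 ν) B).toReal) ∧
    -- (b) the transformed vector Y = X h(X/‖X‖) is not regularly varying of index α
    (∀ r > 1,
      r ^ α / (r ^ (1 / β) + 1)
        ≤ r ^ α * (P {ω | r < ‖X ω‖ * hEx2 β (Θ ω)}).toReal) ∧
    Tendsto (fun r : ℝ => r ^ α * (P {ω | r < ‖X ω‖ * hEx2 β (Θ ω)}).toReal)
      atTop atTop := by
  have hβ : 0 < β := (one_div_pos.2 hα).trans hβ₁
  have hlower : ∀ r > 1, r ^ α / (r ^ (1 / β) + 1)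
      ≤ r ^ α * (P {ω | r < ‖X ω‖ * hEx2 β (Θ ω)}).toReal := fun r hr => by
    rw [div_eq_mul_one_div]
    exact mul_le_mul_of_nonneg_left
      (one_div_rpow_add_one_le_measure_lt_mul_hEx2 hΘmeas hmass hnorm hβ (by linarith))
      (rpow_nonneg (by linarith) α)
  refine ⟨fun B hB _ r hr => ?_, hlower, ?_⟩
  · have hr₀ : 0 < r := by linarith
    rw [measure_angle_mem_and_lt_radius hX.norm hΘmeas hlaw hsupp hB hr.le, ENNReal.toReal_mul,
      ENNReal.toReal_ofReal (rpow_nonneg hr₀.le _), ← mul_assoc, ← rpow_add hr₀, add_neg_cancel,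
      rpow_zero, one_mul]
  · exact tendsto_atTop_mono' atTop ((eventually_gt_atTop 1).mono hlower)
      (tendsto_rpow_div_rpow_add_one_atTop (one_div_pos.2 hβ).le ((one_div_lt hα hβ).1 hβ₁))

/-- Example 2: the vector `X` in `ℝ²` supported on the rays through the angles `b_k`
with radial tails `q_k k^{-ν} x^{-α}` (for `x ≥ 1`) has a regularly varying tail of
index `α` with spectral measure `σEx2 ν`; but for `1/α < β < (1+ν)/α`, the transformed
vector `Y = X · h(X/‖X‖)` with `h = hEx2 β` satisfies
`r^α P(‖Y‖ > r) ≥ r^α/(r^{1/β}+1) → ∞`, so `Y` is not regularly varying of index `α`. -/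
theorem example_unbounded_radial_function
    {Ω : Type*} [MeasurableSpace Ω] (P : Measure Ω) [IsProbabilityMeasure P]
    (X : Ω → EuclideanSpace ℝ (Fin 2)) (hX : Measurable X)
    (Θ : Ω → ℝ) (hΘmeas : Measurable Θ)
    (hΘ : ∀ ω, X ω 0 = ‖X ω‖ * Real.cos (Θ ω) ∧ X ω 1 = ‖X ω‖ * Real.sin (Θ ω))
    (α ν β : ℝ) (hα : 0 < α) (hν : 0 < ν) (hβ₁ : 1 / α < β) (hβ₂ : β < (1 + ν) / α)
    -- the law of X : the angular part takes only the values b_k, the radial part has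
    -- distribution function F_k(x) = 1 - k^{-ν} x^{-α} on each ray, and ‖X‖ ≥ 1 a.s.
    (hlaw : ∀ k : ℕ, ∀ x : ℝ, 1 ≤ x →
      P {ω | Θ ω = bAngle (k + 1) ∧ x < ‖X ω‖}
        = ENNReal.ofReal (qWeight (k + 1) * ((k : ℝ) + 1) ^ (-ν) * x ^ (-α)))
    (hmass : ∀ k : ℕ, P {ω | Θ ω = bAngle (k + 1)} = ENNReal.ofReal (qWeight (k + 1)))
    (hnorm : P {ω | ‖X ω‖ < 1} = 0)
    (hsupp : P {ω | ∀ k : ℕ, Θ ω ≠ bAngle (k + 1)} = 0) :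
    -- (a) X has regularly varying tail of index α with spectral measure σEx2 ν
    (∀ B : Set ℝ, MeasurableSet B → σEx2 ν (frontier B) = 0 → ∀ r > 1,
      r ^ α * (P {ω | Θ ω ∈ B ∧ r < ‖X ω‖}).toReal = ((σEx2 ν) B).toReal) ∧
    -- (b) the transformed vector Y = X h(X/‖X‖) is not regularly varying of index α
    (∀ r > 1,
      r ^ α / (r ^ (1 / β) + 1)
        ≤ r ^ α * (P {ω | r < ‖X ω‖ * hEx2 β (Θ ω)}).toReal) ∧
    Tendsto (fun r : ℝ => r ^ α * (P {ω | r < ‖X ω‖ * hEx2 β (Θ ω)}).toReal)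
      atTop atTop :=
  example_unbounded_radial_function_general P X hX Θ hΘmeas α ν β hα hβ₁ hlaw hmass hnorm hsupp
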